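/- For n ≥ 1, the signed count over all overpartitions π of n with no non-overlined parts, weighted by (-1)^{number of overlined parts} (which is all parts), equals H^o(n) - H^e(n), where H^o(n) (resp. H^e(n)) is the number of overpartitions λ of n with at least one non-overlined part, all non-overlined parts equal to a common size s ≥ every overlined part size, and an odd (resp. even) number of overlined parts. -/

import Mathlib

open scoped Classical

/-- An overpartition of `n`: a finite set of overlined part sizes (the first
occurrence of a size may be overlined, so overlined parts are distinct)
together with a multiset of non-overlined parts, all parts positive,
with total sum `n`. -/
structure Overpartition (n : ℕ) where
  overlined : Finset ℕ
  plain : Multiset ℕ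
  over_pos : ∀ x ∈ overlined, 0 < x
  plain_pos : ∀ x ∈ plain, 0 < x
  sum_eq : (∑ x ∈ overlined, x) + plain.sum = n

/-!
The involution that overlines or un-overlines one copy of the largest part preserves the
multiset of parts and changes the number of overlined parts by one. It maps the
overpartitions whose non-overlined parts are all largest parts to themselves; these are
exactly the overpartitions into distinct overlined parts together with those counted by
`H^o(n)` and `H^e(n)`, so the signed counts of the two families cancel.
-/

theorem Nat.card_subtype_or_of_disjoint {α : Type*} [Finite α] {p q : α → Prop}
    (h : ∀ a, p a → ¬q a) :
    Nat.card {a // p a ∨ q a} = Nat.card {a // p a} + Nat.card {a // q a} := by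
  rw [← Nat.card_sum]
  exact Nat.card_congr (subtypeOrEquiv p q (Pi.disjoint_iff.mpr fun a =>
    Prop.disjoint_iff.mpr fun ⟨hp, hq⟩ => h a hp hq))

namespace Overpartition

variable {n : ℕ}

theorem ext {π ρ : Overpartition n} (ho : π.overlined = ρ.overlined)
    (hp : π.plain = ρ.plain) : π = ρ := by
  cases π; cases ρ; simp_all

def parts (π : Overpartition n) : Multiset ℕ := π.overlined.val + π.plain

theorem mem_parts {π : Overpartition n} {x : ℕ} :
    x ∈ π.parts ↔ x ∈ π.overlined ∨ x ∈ π.plain :=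
  Multiset.mem_add

theorem parts_pos (π : Overpartition n) {x : ℕ} (hx : x ∈ π.parts) : 0 < x := by
  rcases mem_parts.mp hx with h | h
  · exact π.over_pos x h
  · exact π.plain_pos x h

theorem sum_parts (π : Overpartition n) : π.parts.sum = n := by
  rw [parts, Multiset.sum_add, Finset.sum_val]
  exact π.sum_eq

def toPartition (π : Overpartition n) : n.Partition := ⟨π.parts, π.parts_pos, π.sum_parts⟩

theorem overlined_subset_range (π : Overpartition n) : π.overlined ⊆ Finset.range (n + 1) :=
  fun _ hx => Finset.mem_range_succ_iff.mpr <|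
    π.sum_parts ▸ Multiset.le_sum_of_mem (mem_parts.mpr (Or.inl hx))

instance : Finite (Overpartition n) := by
  refine Finite.of_injective (fun π : Overpartition n => (π.toPartition,
    (⟨π.overlined, Finset.mem_powerset.mpr π.overlined_subset_range⟩ :
      (Finset.range (n + 1)).powerset))) fun π ρ h => ?_
  simp only [Prod.mk.injEq, Subtype.mk.injEq] at h
  have hparts : π.parts = ρ.parts := congrArg Nat.Partition.parts h.1
  rw [parts, parts, h.2] at hparts
  exact ext h.2 (add_left_cancel hparts)

def toggle (π : Overpartition n) (s : ℕ) (hs : s ∈ π.parts) : Overpartition n :=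
  if h : s ∈ π.overlined then
    { overlined := π.overlined.erase s
      plain := s ::ₘ π.plain
      over_pos := fun x hx => π.over_pos x (Finset.mem_of_mem_erase hx)
      plain_pos := fun x hx => π.parts_pos (by
        rcases Multiset.mem_cons.mp hx with rfl | hx
        exacts [mem_parts.mpr (Or.inl h), mem_parts.mpr (Or.inr hx)])
      sum_eq := by
        have := Finset.sum_erase_add π.overlined (fun x => x) h
        have := π.sum_eq
        rw [Multiset.sum_cons]
        omega }
  else
    have hp : s ∈ π.plain := (mem_parts.mp hs).resolve_left h
    { overlined := insert s π.overlined
      plain := π.plain.erase s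
      over_pos := fun x hx => by
        rcases Finset.mem_insert.mp hx with rfl | hx
        exacts [π.plain_pos x hp, π.over_pos x hx]
      plain_pos := fun x hx => π.plain_pos x (Multiset.mem_of_mem_erase hx)
      sum_eq := by
        have := Multiset.sum_erase hp
        have := π.sum_eq
        rw [Finset.sum_insert h]
        omega }

theorem overlined_toggle (π : Overpartition n) (s : ℕ) (hs : s ∈ π.parts) :
    (π.toggle s hs).overlined =
      if s ∈ π.overlined then π.overlined.erase s else insert s π.overlined := by
  unfold toggle
  split_ifs <;> rfl

theorem plain_toggle (π : Overpartition n) (s : ℕ) (hs : s ∈ π.parts) :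
    (π.toggle s hs).plain = if s ∈ π.overlined then s ::ₘ π.plain else π.plain.erase s := by
  unfold toggle
  split_ifs <;> rfl

theorem parts_toggle (π : Overpartition n) (s : ℕ) (hs : s ∈ π.parts) :
    (π.toggle s hs).parts = π.parts := by
  rw [parts, parts, overlined_toggle, plain_toggle]
  split_ifs with h
  · rw [Finset.erase_val, Multiset.add_cons, ← Multiset.cons_add,
      Multiset.cons_erase (Finset.mem_def.mp h)]
  · have hp : s ∈ π.plain := (mem_parts.mp hs).resolve_left h
    rw [Finset.insert_val_of_notMem h, Multiset.cons_add, ← Multiset.add_cons,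
      Multiset.cons_erase hp]

theorem even_card_overlined_toggle (π : Overpartition n) (s : ℕ) (hs : s ∈ π.parts) :
    Even (π.toggle s hs).overlined.card ↔ Odd π.overlined.card := by
  rw [overlined_toggle, ← Nat.not_even_iff_odd]
  split_ifs with h
  · rw [← Finset.card_erase_add_one h, Nat.even_add_one, not_not]
  · rw [Finset.card_insert_of_notMem h, Nat.even_add_one]

theorem toggle_toggle (π : Overpartition n) (s : ℕ) (hs : s ∈ π.parts) :
    (π.toggle s hs).toggle s ((π.parts_toggle s hs).symm ▸ hs) = π := by
  by_cases h : s ∈ π.overlined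
  · have h' : s ∉ (π.toggle s hs).overlined := by simp [overlined_toggle, h]
    apply ext
    · rw [overlined_toggle, if_neg h', overlined_toggle, if_pos h, Finset.insert_erase h]
    · rw [plain_toggle, if_neg h', plain_toggle, if_pos h, Multiset.erase_cons_head]
  · have h' : s ∈ (π.toggle s hs).overlined := by simp [overlined_toggle, h]
    apply ext
    · rw [overlined_toggle, if_pos h', overlined_toggle, if_neg h, Finset.erase_insert h]
    · rw [plain_toggle, if_pos h', plain_toggle, if_neg h,
        Multiset.cons_erase ((mem_parts.mp hs).resolve_left h)]

theorem mem_plain_toggle (π : Overpartition n) (s : ℕ) (hs : s ∈ π.parts) {y : ℕ}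
    (hy : y ∈ (π.toggle s hs).plain) : y ∈ π.plain ∨ y = s := by
  rw [plain_toggle] at hy
  split_ifs at hy
  · exact (Multiset.mem_cons.mp hy).symm
  · exact Or.inl (Multiset.mem_of_mem_erase hy)

def largestPart (π : Overpartition n) : ℕ := π.parts.sup

theorem le_largestPart (π : Overpartition n) {x : ℕ} (hx : x ∈ π.parts) : x ≤ π.largestPart :=
  Multiset.le_sup hx

theorem largestPart_mem_parts (hn : n ≠ 0) (π : Overpartition n) : π.largestPart ∈ π.parts := by
  have hne : π.parts ≠ 0 := fun h => hn (π.sum_parts ▸ h ▸ Multiset.sum_zero)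
  obtain ⟨y, hy, hmax⟩ := Multiset.exists_max_image id hne
  rwa [largestPart, le_antisymm (Multiset.sup_le.mpr hmax) (π.le_largestPart hy)]

def toggleLargest (hn : n ≠ 0) (π : Overpartition n) : Overpartition n :=
  π.toggle π.largestPart (π.largestPart_mem_parts hn)

theorem toggleLargest_involutive (hn : n ≠ 0) : Function.Involutive (toggleLargest hn) := by
  intro π
  have hlargest : (π.toggleLargest hn).largestPart = π.largestPart := by
    simp only [largestPart, toggleLargest, parts_toggle]
  unfold toggleLargest at hlargest ⊢
  convert π.toggle_toggle π.largestPart (π.largestPart_mem_parts hn) using 2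

def PlainPartsLargest (π : Overpartition n) : Prop := ∀ y ∈ π.plain, ∀ x ∈ π.parts, x ≤ y

theorem plainPartsLargest_toggleLargest (hn : n ≠ 0) {π : Overpartition n}
    (h : π.PlainPartsLargest) : (π.toggleLargest hn).PlainPartsLargest := by
  intro y hy x hx
  rw [toggleLargest, parts_toggle] at hx
  rcases π.mem_plain_toggle _ _ hy with hy | rfl
  exacts [h y hy x hx, π.le_largestPart hx]

theorem plainPartsLargest_iff (π : Overpartition n) : π.PlainPartsLargest ↔ π.plain = 0 ∨
    π.plain ≠ 0 ∧ (∀ x ∈ π.plain, ∀ y ∈ π.plain, x = y) ∧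
      (∀ x ∈ π.overlined, ∀ y ∈ π.plain, x ≤ y) := by
  constructor
  · intro h
    refine or_iff_not_imp_left.mpr fun h0 => ⟨h0, fun x hx y hy => ?_, fun x hx y hy => ?_⟩
    · exact le_antisymm (h y hy x (mem_parts.mpr (Or.inr hx)))
        (h x hx y (mem_parts.mpr (Or.inr hy)))
    · exact h y hy x (mem_parts.mpr (Or.inl hx))
  · rintro (h0 | ⟨-, heq, hle⟩) y hy x hx
    · simp [h0] at hy
    · rcases mem_parts.mp hx with hx | hx
      exacts [hle x hx y hy, (heq x hx y hy).le]

theorem plainPartsLargest_toggleLargest_iff (hn : n ≠ 0) (π : Overpartition n) :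
    (π.toggleLargest hn).PlainPartsLargest ↔ π.PlainPartsLargest :=
  ⟨fun h => toggleLargest_involutive hn π ▸ plainPartsLargest_toggleLargest hn h,
    plainPartsLargest_toggleLargest hn⟩

theorem odd_card_overlined_toggleLargest (hn : n ≠ 0) (π : Overpartition n) :
    Odd (π.toggleLargest hn).overlined.card ↔ Even π.overlined.card := by
  conv_rhs => rw [← toggleLargest_involutive hn π]
  exact (even_card_overlined_toggle _ _ _).symm

def plainPartsLargestEquiv (hn : n ≠ 0) :
    {π : Overpartition n // π.PlainPartsLargest ∧ Even π.overlined.card} ≃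
      {π : Overpartition n // π.PlainPartsLargest ∧ Odd π.overlined.card} :=
  (toggleLargest_involutive hn).toPerm.subtypeEquiv fun π =>
    and_congr (plainPartsLargest_toggleLargest_iff hn π).symm
      (odd_card_overlined_toggleLargest hn π).symm

theorem card_plainPartsLargest_and (Q : Overpartition n → Prop) :
    Nat.card {π : Overpartition n // π.PlainPartsLargest ∧ Q π} =
      Nat.card {π : Overpartition n // π.plain = 0 ∧ Q π} +
      Nat.card {lam : Overpartition n // lam.plain ≠ 0 ∧
        (∀ x ∈ lam.plain, ∀ y ∈ lam.plain, x = y) ∧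
        (∀ x ∈ lam.overlined, ∀ y ∈ lam.plain, x ≤ y) ∧ Q lam} := by
  rw [← Nat.card_subtype_or_of_disjoint fun π h1 h2 => h2.1 h1.1]
  exact Nat.card_congr <| Equiv.subtypeEquivRight fun π => by
    rw [plainPartsLargest_iff]
    tauto

end Overpartition

theorem stmt_19 (n : ℕ) (hn : 1 ≤ n) :
    (Nat.card {π : Overpartition n // π.plain = 0 ∧ Even π.overlined.card} : ℤ) -
      Nat.card {π : Overpartition n // π.plain = 0 ∧ Odd π.overlined.card} =
    (Nat.card {lam : Overpartition n // lam.plain ≠ 0 ∧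
        (∀ x ∈ lam.plain, ∀ y ∈ lam.plain, x = y) ∧
        (∀ x ∈ lam.overlined, ∀ y ∈ lam.plain, x ≤ y) ∧
        Odd lam.overlined.card} : ℤ) -
      Nat.card {lam : Overpartition n // lam.plain ≠ 0 ∧
        (∀ x ∈ lam.plain, ∀ y ∈ lam.plain, x = y) ∧
        (∀ x ∈ lam.overlined, ∀ y ∈ lam.plain, x ≤ y) ∧
        Even lam.overlined.card} := by
  have key := Nat.card_congr (Overpartition.plainPartsLargestEquiv (Nat.one_le_iff_ne_zero.mp hn))
  rw [Overpartition.card_plainPartsLargest_and, Overpartition.card_plainPartsLargest_and] at key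
  omega
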